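/- arXiv:0907.1880 — 2 statements merged into one kernel-verified Lean document; each statement's English description precedes it below -/
import Mathlib

section
/- Let (A, R) be a cobraided bialgebra over a commutative ring k and α : A → A a k-linear map that is multiplicative and comultiplicative and satisfies R(α(x) ⊗ α(y)) = R(x ⊗ y) for all x, y ∈ A. Let V be an A-comodule in the classical sense, with coassociative structure map ρ : V → A ⊗ V (written ρ(v) = Σ v_A ⊗ v_V), and let α_V : V → V be a linear map with (α ⊗ α_V)∘ρ = ρ∘α_V. Then the map B_α : V ⊗ V → V ⊗ V defined by B_α(v ⊗ w) = Σ R(w_A ⊗ v_A) α_V(w_V) ⊗ α_V(v_V) is a solution of the Hom-Yang-Baxter equation for (V, α_V). -/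
open TensorProduct

/-- The axioms of a Hom-bialgebra (no unit or counit assumed):
multiplicativity and comultiplicativity of the twisting map `α`,
Hom-associativity, Hom-coassociativity, and the compatibility
`Δ(xy) = Σ x₁y₁ ⊗ x₂y₂` (stated via arbitrary finite representations of the
Sweedler sums). -/
def IsHomBialgebra (k : Type*) {A : Type*} [CommRing k] [AddCommGroup A] [Module k A]
    (μ : A →ₗ[k] A →ₗ[k] A) (Δ : A →ₗ[k] A ⊗[k] A) (α : A →ₗ[k] A) : Prop :=
  (∀ x y : A, α (μ x y) = μ (α x) (α y)) ∧
  (∀ x y z : A, μ (α x) (μ y z) = μ (μ x y) (α z)) ∧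
  (TensorProduct.map α α ∘ₗ Δ = Δ ∘ₗ α) ∧
  (TensorProduct.map α Δ ∘ₗ Δ =
    (TensorProduct.assoc k A A A).toLinearMap ∘ₗ TensorProduct.map Δ α ∘ₗ Δ) ∧
  (∀ (x y : A) (m n : ℕ) (x1 x2 : Fin m → A) (y1 y2 : Fin n → A),
    Δ x = ∑ i, x1 i ⊗ₜ[k] x2 i → Δ y = ∑ j, y1 j ⊗ₜ[k] y2 j →
    Δ (μ x y) = ∑ i, ∑ j, μ (x1 i) (y1 j) ⊗ₜ[k] μ (x2 i) (y2 j))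

/-- A cobraided Hom-bialgebra: a Hom-bialgebra together with a bilinear form `R`
satisfying the three axioms (i), (ii), (iii), stated via arbitrary finite
representations of the Sweedler sums. -/
def IsCobraidedHomBialgebra (k : Type*) {A : Type*} [CommRing k] [AddCommGroup A] [Module k A]
    (μ : A →ₗ[k] A →ₗ[k] A) (Δ : A →ₗ[k] A ⊗[k] A) (α : A →ₗ[k] A)
    (R : A →ₗ[k] A →ₗ[k] k) : Prop :=
  IsHomBialgebra k μ Δ α ∧
  (∀ (x y z : A) (n : ℕ) (z1 z2 : Fin n → A), Δ z = ∑ i, z1 i ⊗ₜ[k] z2 i →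
    R (μ x y) (α z) = ∑ i, R (α x) (z1 i) * R (α y) (z2 i)) ∧
  (∀ (x y z : A) (n : ℕ) (x1 x2 : Fin n → A), Δ x = ∑ i, x1 i ⊗ₜ[k] x2 i →
    R (α x) (μ y z) = ∑ i, R (x1 i) (α z) * R (x2 i) (α y)) ∧
  (∀ (x y : A) (m n : ℕ) (x1 x2 : Fin m → A) (y1 y2 : Fin n → A),
    Δ x = ∑ i, x1 i ⊗ₜ[k] x2 i → Δ y = ∑ j, y1 j ⊗ₜ[k] y2 j →
    ∑ i, ∑ j, R (x2 i) (y2 j) • μ (y1 j) (x1 i)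
      = ∑ i, ∑ j, R (x1 i) (y1 j) • μ (x2 i) (y2 j))

/-- A (classical) cobraided bialgebra, without unit, counit, or invertibility of `R`. -/
def IsCobraidedBialgebra (k : Type*) {A : Type*} [CommRing k] [AddCommGroup A] [Module k A]
    (μ : A →ₗ[k] A →ₗ[k] A) (Δ : A →ₗ[k] A ⊗[k] A) (R : A →ₗ[k] A →ₗ[k] k) : Prop :=
  (∀ x y z : A, μ (μ x y) z = μ x (μ y z)) ∧
  (TensorProduct.map LinearMap.id Δ ∘ₗ Δ =
    (TensorProduct.assoc k A A A).toLinearMap ∘ₗ TensorProduct.map Δ LinearMap.id ∘ₗ Δ) ∧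
  (∀ (x y : A) (m n : ℕ) (x1 x2 : Fin m → A) (y1 y2 : Fin n → A),
    Δ x = ∑ i, x1 i ⊗ₜ[k] x2 i → Δ y = ∑ j, y1 j ⊗ₜ[k] y2 j →
    Δ (μ x y) = ∑ i, ∑ j, μ (x1 i) (y1 j) ⊗ₜ[k] μ (x2 i) (y2 j)) ∧
  (∀ (x y z : A) (n : ℕ) (z1 z2 : Fin n → A), Δ z = ∑ i, z1 i ⊗ₜ[k] z2 i →
    R (μ x y) z = ∑ i, R x (z1 i) * R y (z2 i)) ∧
  (∀ (x y z : A) (n : ℕ) (x1 x2 : Fin n → A), Δ x = ∑ i, x1 i ⊗ₜ[k] x2 i →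
    R x (μ y z) = ∑ i, R (x1 i) z * R (x2 i) y) ∧
  (∀ (x y : A) (m n : ℕ) (x1 x2 : Fin m → A) (y1 y2 : Fin n → A),
    Δ x = ∑ i, x1 i ⊗ₜ[k] x2 i → Δ y = ∑ j, y1 j ⊗ₜ[k] y2 j →
    ∑ i, ∑ j, R (x2 i) (y2 j) • μ (y1 j) (x1 i)
      = ∑ i, ∑ j, R (x1 i) (y1 j) • μ (x2 i) (y2 j))

/-- A braided (quasi-triangular) Hom-bialgebra, with `R ∈ A ⊗ A`. -/
def IsBraidedHomBialgebra (k : Type*) {A : Type*} [CommRing k] [AddCommGroup A] [Module k A]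
    (μ : A →ₗ[k] A →ₗ[k] A) (Δ : A →ₗ[k] A ⊗[k] A) (α : A →ₗ[k] A)
    (Rel : A ⊗[k] A) : Prop :=
  IsHomBialgebra k μ Δ α ∧
  (∀ (n : ℕ) (s t : Fin n → A), Rel = ∑ i, s i ⊗ₜ[k] t i →
    TensorProduct.map Δ α Rel = ∑ i, ∑ j, (α (s i) ⊗ₜ[k] α (s j)) ⊗ₜ[k] μ (t i) (t j)) ∧
  (∀ (n : ℕ) (s t : Fin n → A), Rel = ∑ i, s i ⊗ₜ[k] t i →
    TensorProduct.map α Δ Rel = ∑ i, ∑ j, μ (s i) (s j) ⊗ₜ[k] (α (t j) ⊗ₜ[k] α (t i))) ∧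
  (∀ (x : A) (m n : ℕ) (x1 x2 : Fin m → A) (s t : Fin n → A),
    Δ x = ∑ i, x1 i ⊗ₜ[k] x2 i → Rel = ∑ i, s i ⊗ₜ[k] t i →
    ∑ i, ∑ j, μ (x2 i) (s j) ⊗ₜ[k] μ (x1 i) (t j)
      = ∑ i, ∑ j, μ (s j) (x1 i) ⊗ₜ[k] μ (t j) (x2 i))

/-- The convolution-type product on the dual induced by a comultiplication:
`⟨Δ*(φ ⊗ ψ), x⟩ = Σ φ(x₁) ψ(x₂)`. -/
noncomputable def deltaStar (k : Type*) {A : Type*} [CommRing k] [AddCommGroup A] [Module k A]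
    (Δ : A →ₗ[k] A ⊗[k] A) (φ ψ : Module.Dual k A) : Module.Dual k A :=
  TensorProduct.lift ((LinearMap.mul k k).compl₁₂ φ ψ) ∘ₗ Δ

/-- The bilinear version of `deltaStar`, `Δ* : A* →ₗ A* →ₗ A*`. -/
noncomputable def deltaStarBil (k : Type*) {A : Type*} [CommRing k] [AddCommGroup A] [Module k A]
    (Δ : A →ₗ[k] A ⊗[k] A) :
    Module.Dual k A →ₗ[k] Module.Dual k A →ₗ[k] Module.Dual k A :=
  TensorProduct.curry (Δ.dualMap ∘ₗ TensorProduct.dualDistrib k A A)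

/-- The dual comultiplication `μ* : A* → A* ⊗ A*` of a multiplication `μ` on a
finite free module, determined by `⟨μ*(φ), x ⊗ y⟩ = φ(xy)`. -/
noncomputable def mulStar (k : Type*) {A : Type*} [CommRing k] [AddCommGroup A] [Module k A]
    [Module.Finite k A] [Module.Free k A] (μ : A →ₗ[k] A →ₗ[k] A) :
    Module.Dual k A →ₗ[k] Module.Dual k A ⊗[k] Module.Dual k A :=
  (TensorProduct.dualDistribEquiv k A A).symm.toLinearMap ∘ₗ (TensorProduct.lift μ).dualMap

/-- The bilinear form `R̂` on the dual induced by an element `Rel = Σ sᵢ ⊗ tᵢ ∈ A ⊗ A`: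
`R̂(φ ⊗ ψ) = Σ φ(sᵢ) ψ(tᵢ)`. -/
noncomputable def rhat (k : Type*) {A : Type*} [CommRing k] [AddCommGroup A] [Module k A]
    (Rel : A ⊗[k] A) : Module.Dual k A →ₗ[k] Module.Dual k A →ₗ[k] k :=
  TensorProduct.curry (LinearMap.applyₗ (R := k) Rel ∘ₗ TensorProduct.dualDistrib k A A)

/-- A comodule `(M, α_M, ρ)` over a Hom-coassociative coalgebra `(A, Δ, α)`:
Hom-coassociativity and comultiplicativity of the structure map. -/
def IsComodule (k : Type*) {A M : Type*} [CommRing k] [AddCommGroup A] [Module k A]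
    [AddCommGroup M] [Module k M] (Δ : A →ₗ[k] A ⊗[k] A) (α : A →ₗ[k] A)
    (αM : M →ₗ[k] M) (ρ : M →ₗ[k] A ⊗[k] M) : Prop :=
  ((TensorProduct.assoc k A A M).toLinearMap ∘ₗ TensorProduct.map Δ αM ∘ₗ ρ
      = TensorProduct.map α ρ ∘ₗ ρ) ∧
  (TensorProduct.map α αM ∘ₗ ρ = ρ ∘ₗ αM)

/-- The map `B_{V,W} : V ⊗ W → W ⊗ V`, `B_{V,W}(v ⊗ w) = Σ R(w_A ⊗ v_A) w_W ⊗ v_V`,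
induced by comodule structure maps `ρ_V`, `ρ_W` and a bilinear form `R`. -/
noncomputable def Bmap (k : Type*) {A V W : Type*} [CommRing k] [AddCommGroup A] [Module k A]
    [AddCommGroup V] [Module k V] [AddCommGroup W] [Module k W]
    (R : A →ₗ[k] A →ₗ[k] k) (ρV : V →ₗ[k] A ⊗[k] V) (ρW : W →ₗ[k] A ⊗[k] W) :
    V ⊗[k] W →ₗ[k] W ⊗[k] V :=
  (TensorProduct.lid k (W ⊗[k] V)).toLinearMap
    ∘ₗ TensorProduct.map (TensorProduct.lift R) LinearMap.id
    ∘ₗ (TensorProduct.tensorTensorTensorComm k A W A V).toLinearMap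
    ∘ₗ TensorProduct.map ρW ρV
    ∘ₗ (TensorProduct.comm k V W).toLinearMap

/-- `B` is a solution of the Hom-Yang-Baxter equation for `(V, αV)`. -/
def IsHYBESolution (k : Type*) {V : Type*} [CommRing k] [AddCommGroup V] [Module k V]
    (αV : V →ₗ[k] V) (B : V ⊗[k] V →ₗ[k] V ⊗[k] V) : Prop :=
  (B ∘ₗ TensorProduct.map αV αV = TensorProduct.map αV αV ∘ₗ B) ∧
  ((TensorProduct.assoc k V V V).symm.toLinearMap
      ∘ₗ TensorProduct.map αV B
      ∘ₗ (TensorProduct.assoc k V V V).toLinearMap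
      ∘ₗ TensorProduct.map B αV
      ∘ₗ (TensorProduct.assoc k V V V).symm.toLinearMap
      ∘ₗ TensorProduct.map αV B
      ∘ₗ (TensorProduct.assoc k V V V).toLinearMap
    = TensorProduct.map B αV
      ∘ₗ (TensorProduct.assoc k V V V).symm.toLinearMap
      ∘ₗ TensorProduct.map αV B
      ∘ₗ (TensorProduct.assoc k V V V).toLinearMap
      ∘ₗ TensorProduct.map B αV)

/-- A (classical, possibly non-unital non-counital) bialgebra. -/
def IsBialgebraNC (k : Type*) {H : Type*} [CommRing k] [AddCommGroup H] [Module k H]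
    (μ : H →ₗ[k] H →ₗ[k] H) (Δ : H →ₗ[k] H ⊗[k] H) : Prop :=
  (∀ x y z : H, μ (μ x y) z = μ x (μ y z)) ∧
  (TensorProduct.map LinearMap.id Δ ∘ₗ Δ =
    (TensorProduct.assoc k H H H).toLinearMap ∘ₗ TensorProduct.map Δ LinearMap.id ∘ₗ Δ) ∧
  (∀ (x y : H) (m n : ℕ) (x1 x2 : Fin m → H) (y1 y2 : Fin n → H),
    Δ x = ∑ i, x1 i ⊗ₜ[k] x2 i → Δ y = ∑ j, y1 j ⊗ₜ[k] y2 j →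
    Δ (μ x y) = ∑ i, ∑ j, μ (x1 i) (y1 j) ⊗ₜ[k] μ (x2 i) (y2 j))

/-!
If `B` solves the classical Yang–Baxter equation and commutes with `α ⊗ α`, then `(α ⊗ α) ∘ B`
solves the Hom-Yang–Baxter equation for `α`: the three copies of `α ⊗ α ⊗ α` commute past the
braidings to the front. That `B` commutes with `α_V ⊗ α_V` is the compatibility of `α_V` with `ρ`
together with the `α`-invariance of `R`. For the classical equation, both sides send `u ⊗ v ⊗ w`
to `w ⊗ v ⊗ u` weighted by a product of three values of `R` on the iterated coactions of `u`, `v`,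
`w`. By coassociativity the iterated coaction is `(Δ ⊗ id) ∘ ρ`, and after `Δ ⊗ Δ ⊗ Δ` the two
weights agree: this is the quantum Yang–Baxter equation for `R`, obtained from the axiom for
`R(x ⊗ yz)` and the commutation axiom.
-/

section Contraction

variable {k A : Type*} [CommRing k] [AddCommGroup A] [Module k A]

noncomputable def contractForm {M N : Type*} [AddCommGroup M] [Module k M] [AddCommGroup N]
    [Module k N] (R : A →ₗ[k] A →ₗ[k] k) : (A ⊗[k] M) ⊗[k] (A ⊗[k] N) →ₗ[k] M ⊗[k] N :=
  (TensorProduct.lid k (M ⊗[k] N)).toLinearMap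
    ∘ₗ map (TensorProduct.lift R) LinearMap.id
    ∘ₗ (TensorProduct.tensorTensorTensorComm k A M A N).toLinearMap

variable {M N : Type*} [AddCommGroup M] [Module k M] [AddCommGroup N] [Module k N]

@[simp]
theorem contractForm_tmul (R : A →ₗ[k] A →ₗ[k] k) (a b : A) (m : M) (n : N) :
    contractForm R ((a ⊗ₜ[k] m) ⊗ₜ[k] (b ⊗ₜ[k] n)) = R a b • (m ⊗ₜ[k] n) := by
  simp [contractForm]

theorem contractForm_comp_map_map {R : A →ₗ[k] A →ₗ[k] k} {α : A →ₗ[k] A}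
    (hinv : ∀ x y : A, R (α x) (α y) = R x y) (f : M →ₗ[k] M) (g : N →ₗ[k] N) :
    contractForm R ∘ₗ map (map α f) (map α g) = map f g ∘ₗ contractForm R := by
  ext a m b n
  simp [hinv]

variable {V W : Type*} [AddCommGroup V] [Module k V] [AddCommGroup W] [Module k W]

theorem Bmap_eq (R : A →ₗ[k] A →ₗ[k] k) (ρV : V →ₗ[k] A ⊗[k] V) (ρW : W →ₗ[k] A ⊗[k] W) :
    Bmap k R ρV ρW = contractForm R ∘ₗ map ρW ρV ∘ₗ (TensorProduct.comm k V W).toLinearMap :=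
  rfl

@[simp]
theorem Bmap_tmul (R : A →ₗ[k] A →ₗ[k] k) (ρV : V →ₗ[k] A ⊗[k] V) (ρW : W →ₗ[k] A ⊗[k] W)
    (v : V) (w : W) : Bmap k R ρV ρW (v ⊗ₜ[k] w) = contractForm R (ρW w ⊗ₜ[k] ρV v) := by
  simp [Bmap_eq]

theorem Bmap_comp_map {R : A →ₗ[k] A →ₗ[k] k} {α : A →ₗ[k] A}
    (hinv : ∀ x y : A, R (α x) (α y) = R x y) {ρV : V →ₗ[k] A ⊗[k] V} {ρW : W →ₗ[k] A ⊗[k] W}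
    {f : V →ₗ[k] V} {g : W →ₗ[k] W} (hf : map α f ∘ₗ ρV = ρV ∘ₗ f)
    (hg : map α g ∘ₗ ρW = ρW ∘ₗ g) :
    Bmap k R ρV ρW ∘ₗ map f g = map g f ∘ₗ Bmap k R ρV ρW := by
  simp only [Bmap_eq, LinearMap.comp_assoc, ← map_comp_comm_eq]
  rw [← LinearMap.comp_assoc _ (map g f), ← map_comp, ← hf, ← hg, map_comp,
    ← LinearMap.comp_assoc _ (contractForm R) (map g f), ← contractForm_comp_map_map hinv]
  simp only [LinearMap.comp_assoc]

end Contraction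

section Twisting

variable {k V : Type*} [CommRing k] [AddCommGroup V] [Module k V]

theorem IsHYBESolution.twist {α : V →ₗ[k] V} {B : V ⊗[k] V →ₗ[k] V ⊗[k] V}
    (hB : IsHYBESolution k LinearMap.id B) (hcomm : B ∘ₗ map α α = map α α ∘ₗ B) :
    IsHYBESolution k α (map α α ∘ₗ B) := by
  set α₃ : Module.End k ((V ⊗[k] V) ⊗[k] V) := map (map α α) α
  set B₁₂ : Module.End k ((V ⊗[k] V) ⊗[k] V) := map B LinearMap.id
  set B₂₃ : Module.End k ((V ⊗[k] V) ⊗[k] V) :=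
    (TensorProduct.assoc k V V V).symm.toLinearMap ∘ₗ map LinearMap.id B
      ∘ₗ (TensorProduct.assoc k V V V).toLinearMap
  have twist₁₂ : map (map α α ∘ₗ B) α = α₃ * B₁₂ := by
    rw [Module.End.mul_eq_comp, ← map_comp, LinearMap.comp_id]
  have twist₂₃ : (TensorProduct.assoc k V V V).symm.toLinearMap ∘ₗ map α (map α α ∘ₗ B)
      ∘ₗ (TensorProduct.assoc k V V V).toLinearMap = α₃ * B₂₃ := by
    rw [Module.End.mul_eq_comp, ← LinearMap.comp_id α, map_comp, LinearMap.comp_id]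
    simp only [α₃, B₂₃, ← LinearMap.comp_assoc, map_map_comp_assoc_symm_eq]
  have comm₁₂ : Commute B₁₂ α₃ := by
    rw [commute_iff_eq, Module.End.mul_eq_comp, Module.End.mul_eq_comp, ← map_comp, ← map_comp,
      hcomm, LinearMap.id_comp, LinearMap.comp_id]
  have comm₂₃ : Commute B₂₃ α₃ := by
    have hmid : map LinearMap.id B ∘ₗ map α (map α α) = map α (map α α) ∘ₗ map LinearMap.id B := by
      rw [← map_comp, ← map_comp, hcomm, LinearMap.id_comp, LinearMap.comp_id]
    rw [commute_iff_eq, Module.End.mul_eq_comp, Module.End.mul_eq_comp]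
    simp only [α₃, B₂₃, LinearMap.comp_assoc, ← map_map_comp_assoc_eq]
    rw [← LinearMap.comp_assoc _ (map α (map α α)) (map LinearMap.id B), hmid]
    simp only [← LinearMap.comp_assoc, map_map_comp_assoc_symm_eq]
  have ybe : B₂₃ * B₁₂ * B₂₃ = B₁₂ * B₂₃ * B₁₂ := by
    simpa only [Module.End.mul_eq_comp, B₁₂, B₂₃, LinearMap.comp_assoc, map_id] using hB.2
  have key : α₃ * B₂₃ * (α₃ * B₁₂) * (α₃ * B₂₃) = α₃ * B₁₂ * (α₃ * B₂₃) * (α₃ * B₁₂) := by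
    simp only [mul_assoc, comm₁₂.left_comm, comm₂₃.left_comm] at ybe ⊢
    rw [ybe]
  rw [← twist₁₂, ← twist₂₃] at key
  refine ⟨by rw [LinearMap.comp_assoc, hcomm], ?_⟩
  simpa only [Module.End.mul_eq_comp, LinearMap.comp_assoc] using key

end Twisting

section ReverseWeighted

variable {k X V : Type*} [CommRing k] [AddCommGroup X] [Module k X] [AddCommGroup V] [Module k V]

noncomputable def reverseWeighted (S : X ⊗[k] (X ⊗[k] X) →ₗ[k] k) :
    (X ⊗[k] V) ⊗[k] ((X ⊗[k] V) ⊗[k] (X ⊗[k] V)) →ₗ[k] (V ⊗[k] V) ⊗[k] V :=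
  (TensorProduct.lid k _).toLinearMap
    ∘ₗ map S (map (TensorProduct.comm k V V).toLinearMap LinearMap.id
      ∘ₗ (TensorProduct.comm k V (V ⊗[k] V)).toLinearMap)
    ∘ₗ (TensorProduct.tensorTensorTensorComm k X V (X ⊗[k] X) (V ⊗[k] V)).toLinearMap
    ∘ₗ map LinearMap.id (TensorProduct.tensorTensorTensorComm k X V X V).toLinearMap

@[simp]
theorem reverseWeighted_tmul (S : X ⊗[k] (X ⊗[k] X) →ₗ[k] k) (x y z : X) (u v w : V) :
    reverseWeighted S ((x ⊗ₜ[k] u) ⊗ₜ[k] ((y ⊗ₜ[k] v) ⊗ₜ[k] (z ⊗ₜ[k] w)))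
      = S (x ⊗ₜ[k] (y ⊗ₜ[k] z)) • ((w ⊗ₜ[k] v) ⊗ₜ[k] u) := by
  simp [reverseWeighted]

theorem reverseWeighted_comp_map {Y : Type*} [AddCommGroup Y] [Module k Y]
    (S : X ⊗[k] (X ⊗[k] X) →ₗ[k] k) (f : Y →ₗ[k] X) :
    reverseWeighted S ∘ₗ map (map f LinearMap.id)
        (map (map f LinearMap.id) (map f LinearMap.id))
      = (reverseWeighted (S ∘ₗ map f (map f f)) : _ →ₗ[k] (V ⊗[k] V) ⊗[k] V) := by
  ext
  simp

end ReverseWeighted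

section YangBaxter

variable {k A V : Type*} [CommRing k] [AddCommGroup A] [Module k A] [AddCommGroup V] [Module k V]

noncomputable def flipPairing (R : A →ₗ[k] A →ₗ[k] k) : A ⊗[k] A →ₗ[k] k :=
  TensorProduct.lift R ∘ₗ (TensorProduct.comm k A A).toLinearMap

@[simp]
theorem flipPairing_tmul (R : A →ₗ[k] A →ₗ[k] k) (x y : A) :
    flipPairing R (x ⊗ₜ[k] y) = R y x := by
  simp [flipPairing]

noncomputable def yangBaxterWeightLeft (R : A →ₗ[k] A →ₗ[k] k) :
    (A ⊗[k] A) ⊗[k] ((A ⊗[k] A) ⊗[k] (A ⊗[k] A)) →ₗ[k] k :=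
  (TensorProduct.lid k k).toLinearMap
  ∘ₗ map (flipPairing R) (flipPairing R)
  ∘ₗ (TensorProduct.tensorTensorTensorComm k A A A A).toLinearMap
  ∘ₗ map LinearMap.id (TensorProduct.comm k A A).toLinearMap
  ∘ₗ map LinearMap.id (TensorProduct.lid k (A ⊗[k] A)).toLinearMap
  ∘ₗ map LinearMap.id (map (flipPairing R) LinearMap.id)
  ∘ₗ map LinearMap.id (TensorProduct.tensorTensorTensorComm k A A A A).toLinearMap

@[simp]
theorem yangBaxterWeightLeft_tmul (R : A →ₗ[k] A →ₗ[k] k) (a₁ a₂ b₁ b₂ c₁ c₂ : A) :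
    yangBaxterWeightLeft R ((a₁ ⊗ₜ[k] a₂) ⊗ₜ[k] ((b₁ ⊗ₜ[k] b₂) ⊗ₜ[k] (c₁ ⊗ₜ[k] c₂)))
      = R c₁ b₁ * (R c₂ a₁ * R b₂ a₂) := by
  simp [yangBaxterWeightLeft, smul_tmul', mul_assoc]

noncomputable def yangBaxterWeightRight (R : A →ₗ[k] A →ₗ[k] k) :
    (A ⊗[k] A) ⊗[k] ((A ⊗[k] A) ⊗[k] (A ⊗[k] A)) →ₗ[k] k :=
  (TensorProduct.lid k k).toLinearMap
  ∘ₗ map (flipPairing R) (flipPairing R)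
  ∘ₗ (TensorProduct.tensorTensorTensorComm k A A A A).toLinearMap
  ∘ₗ map LinearMap.id (TensorProduct.rid k (A ⊗[k] A)).toLinearMap
  ∘ₗ map LinearMap.id (map LinearMap.id (flipPairing R))
  ∘ₗ map LinearMap.id (TensorProduct.tensorTensorTensorComm k A A A A).toLinearMap

@[simp]
theorem yangBaxterWeightRight_tmul (R : A →ₗ[k] A →ₗ[k] k) (a₁ a₂ b₁ b₂ c₁ c₂ : A) :
    yangBaxterWeightRight R ((a₁ ⊗ₜ[k] a₂) ⊗ₜ[k] ((b₁ ⊗ₜ[k] b₂) ⊗ₜ[k] (c₁ ⊗ₜ[k] c₂)))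
      = R b₁ a₁ * (R c₁ a₂ * R c₂ b₂) := by
  simp [yangBaxterWeightRight, smul_tmul']
  ring

/-- The quantum Yang–Baxter equation for the coquasitriangular form `R`. -/
theorem IsCobraidedBialgebra.yangBaxterWeight_comp_comul {μ : A →ₗ[k] A →ₗ[k] A}
    {Δ : A →ₗ[k] A ⊗[k] A} {R : A →ₗ[k] A →ₗ[k] k} (h : IsCobraidedBialgebra k μ Δ R) :
    yangBaxterWeightLeft R ∘ₗ map Δ (map Δ Δ) = yangBaxterWeightRight R ∘ₗ map Δ (map Δ Δ) := by
  obtain ⟨-, -, -, -, hR_mul_right, hR_comm⟩ := h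
  apply TensorProduct.ext_threefold'
  intro a b c
  obtain ⟨l, a₁, a₂, ha⟩ := exists_sum_tmul_eq (Δ a)
  obtain ⟨m, b₁, b₂, hb⟩ := exists_sum_tmul_eq (Δ b)
  obtain ⟨n, c₁, c₂, hc⟩ := exists_sum_tmul_eq (Δ c)
  have sum_rotate (f : Fin n → Fin m → Fin l → k) :
      ∑ p, ∑ j, ∑ i, f p j i = ∑ j, ∑ i, ∑ p, f p j i := by
    rw [Finset.sum_comm]
    exact Finset.sum_congr rfl fun j _ => Finset.sum_comm
  simp only [LinearMap.comp_apply, map_tmul, ha, hb, hc, sum_tmul, tmul_sum, map_sum,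
    yangBaxterWeightLeft_tmul, yangBaxterWeightRight_tmul]
  calc ∑ p, ∑ j, ∑ i, R (c₁ p) (b₁ j) * (R (c₂ p) (a₁ i) * R (b₂ j) (a₂ i))
      = ∑ j, ∑ i, R (b₂ j) (a₂ i) * R c (μ (a₁ i) (b₁ j)) := by
        simp only [sum_rotate, hR_mul_right c _ _ n c₁ c₂ hc, Finset.mul_sum]
        exact Finset.sum_congr rfl fun j _ => Finset.sum_congr rfl fun i _ =>
          Finset.sum_congr rfl fun p _ => by ring
    _ = R c (∑ j, ∑ i, R (b₂ j) (a₂ i) • μ (a₁ i) (b₁ j)) := by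
        simp only [map_sum, map_smul, smul_eq_mul]
    _ = R c (∑ j, ∑ i, R (b₁ j) (a₁ i) • μ (b₂ j) (a₂ i)) := by
        rw [hR_comm b a m l b₁ b₂ a₁ a₂ hb ha]
    _ = ∑ j, ∑ i, R (b₁ j) (a₁ i) * R c (μ (b₂ j) (a₂ i)) := by
        simp only [map_sum, map_smul, smul_eq_mul]
    _ = ∑ p, ∑ j, ∑ i, R (b₁ j) (a₁ i) * (R (c₁ p) (a₂ i) * R (c₂ p) (b₂ j)) := by
        simp only [sum_rotate, hR_mul_right c _ _ n c₁ c₂ hc, Finset.mul_sum]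

noncomputable def iteratedCoaction (ρ : V →ₗ[k] A ⊗[k] V) : V →ₗ[k] (A ⊗[k] A) ⊗[k] V :=
  (TensorProduct.assoc k A A V).symm.toLinearMap ∘ₗ map LinearMap.id ρ ∘ₗ ρ

theorem iteratedCoaction_eq {Δ : A →ₗ[k] A ⊗[k] A} {ρ : V →ₗ[k] A ⊗[k] V}
    (hcoass : (TensorProduct.assoc k A A V).toLinearMap ∘ₗ map Δ LinearMap.id ∘ₗ ρ
      = map LinearMap.id ρ ∘ₗ ρ) :
    iteratedCoaction ρ = map Δ LinearMap.id ∘ₗ ρ := by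
  rw [iteratedCoaction, ← hcoass]
  ext
  simp

theorem reverseWeighted_comp_map_iteratedCoaction {Δ : A →ₗ[k] A ⊗[k] A}
    {ρ : V →ₗ[k] A ⊗[k] V}
    (hcoass : (TensorProduct.assoc k A A V).toLinearMap ∘ₗ map Δ LinearMap.id ∘ₗ ρ
      = map LinearMap.id ρ ∘ₗ ρ)
    (S : (A ⊗[k] A) ⊗[k] ((A ⊗[k] A) ⊗[k] (A ⊗[k] A)) →ₗ[k] k) :
    reverseWeighted S ∘ₗ map (iteratedCoaction ρ) (map (iteratedCoaction ρ) (iteratedCoaction ρ))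
      = reverseWeighted (S ∘ₗ map Δ (map Δ Δ)) ∘ₗ map ρ (map ρ ρ) := by
  rw [iteratedCoaction_eq hcoass, map_comp, map_comp, ← LinearMap.comp_assoc,
    reverseWeighted_comp_map]

theorem Bmap_yangBaxter_lhs_eq (R : A →ₗ[k] A →ₗ[k] k) (ρ : V →ₗ[k] A ⊗[k] V) :
    (TensorProduct.assoc k V V V).symm.toLinearMap
      ∘ₗ map LinearMap.id (Bmap k R ρ ρ)
      ∘ₗ (TensorProduct.assoc k V V V).toLinearMap
      ∘ₗ map (Bmap k R ρ ρ) LinearMap.id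
      ∘ₗ (TensorProduct.assoc k V V V).symm.toLinearMap
      ∘ₗ map LinearMap.id (Bmap k R ρ ρ)
      ∘ₗ (TensorProduct.assoc k V V V).toLinearMap
    = reverseWeighted (yangBaxterWeightLeft R)
        ∘ₗ map (iteratedCoaction ρ) (map (iteratedCoaction ρ) (iteratedCoaction ρ))
        ∘ₗ (TensorProduct.assoc k V V V).toLinearMap := by
  apply TensorProduct.ext_threefold
  intro u v w
  simp only [iteratedCoaction, LinearMap.comp_apply, LinearEquiv.coe_coe, assoc_tmul, map_tmul,
    LinearMap.id_coe, id_eq, Bmap_tmul]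
  induction ρ w using TensorProduct.induction_on with
  | zero => simp
  | add _ _ h₁ h₂ => simp only [add_tmul, tmul_add, map_add, h₁, h₂]
  | tmul c z =>
    induction ρ v using TensorProduct.induction_on with
    | zero => simp
    | add _ _ h₁ h₂ => simp only [add_tmul, tmul_add, map_add, h₁, h₂]
    | tmul b y =>
      simp only [contractForm_tmul, tmul_smul, map_smul, assoc_symm_tmul, map_tmul,
        LinearMap.id_coe, id_eq, Bmap_tmul]
      induction ρ z using TensorProduct.induction_on with
      | zero => simp
      | add _ _ h₁ h₂ => simp only [add_tmul, tmul_add, map_add, smul_add, h₁, h₂]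
      | tmul c' z' =>
        induction ρ u using TensorProduct.induction_on with
        | zero => simp
        | add _ _ h₁ h₂ => simp only [add_tmul, tmul_add, map_add, smul_add, h₁, h₂]
        | tmul a x =>
          simp only [contractForm_tmul, smul_tmul', map_smul, map_tmul, LinearMap.id_coe, id_eq,
            assoc_tmul, assoc_symm_tmul, Bmap_tmul]
          induction ρ y using TensorProduct.induction_on with
          | zero => simp
          | add _ _ h₁ h₂ => simp only [add_tmul, tmul_add, map_add, smul_add, h₁, h₂]
          | tmul b' y' =>
            induction ρ x using TensorProduct.induction_on with
            | zero => simp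
            | add _ _ h₁ h₂ => simp only [add_tmul, tmul_add, map_add, smul_add, h₁, h₂]
            | tmul a' x' =>
              simp only [contractForm_tmul, smul_tmul', tmul_smul, assoc_symm_tmul,
                reverseWeighted_tmul, yangBaxterWeightLeft_tmul, smul_smul]
              ring_nf

theorem Bmap_yangBaxter_rhs_eq (R : A →ₗ[k] A →ₗ[k] k) (ρ : V →ₗ[k] A ⊗[k] V) :
    map (Bmap k R ρ ρ) LinearMap.id
      ∘ₗ (TensorProduct.assoc k V V V).symm.toLinearMap
      ∘ₗ map LinearMap.id (Bmap k R ρ ρ)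
      ∘ₗ (TensorProduct.assoc k V V V).toLinearMap
      ∘ₗ map (Bmap k R ρ ρ) LinearMap.id
    = reverseWeighted (yangBaxterWeightRight R)
        ∘ₗ map (iteratedCoaction ρ) (map (iteratedCoaction ρ) (iteratedCoaction ρ))
        ∘ₗ (TensorProduct.assoc k V V V).toLinearMap := by
  apply TensorProduct.ext_threefold
  intro u v w
  simp only [iteratedCoaction, LinearMap.comp_apply, LinearEquiv.coe_coe, assoc_tmul, map_tmul,
    LinearMap.id_coe, id_eq, Bmap_tmul]
  induction ρ v using TensorProduct.induction_on with
  | zero => simp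
  | add _ _ h₁ h₂ => simp only [add_tmul, tmul_add, map_add, h₁, h₂]
  | tmul b y =>
    induction ρ u using TensorProduct.induction_on with
    | zero => simp
    | add _ _ h₁ h₂ => simp only [add_tmul, tmul_add, map_add, h₁, h₂]
    | tmul a x =>
      simp only [contractForm_tmul, smul_tmul', map_smul, map_tmul, LinearMap.id_coe, id_eq,
        assoc_tmul, Bmap_tmul]
      induction ρ w using TensorProduct.induction_on with
      | zero => simp
      | add _ _ h₁ h₂ => simp only [add_tmul, tmul_add, map_add, h₁, h₂]
      | tmul c z =>
        induction ρ x using TensorProduct.induction_on with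
        | zero => simp
        | add _ _ h₁ h₂ => simp only [add_tmul, tmul_add, map_add, h₁, h₂]
        | tmul a' x' =>
          simp only [contractForm_tmul, tmul_smul, map_smul, map_tmul, LinearMap.id_coe, id_eq,
            assoc_symm_tmul, Bmap_tmul]
          induction ρ z using TensorProduct.induction_on with
          | zero => simp
          | add _ _ h₁ h₂ => simp only [add_tmul, tmul_add, map_add, smul_add, h₁, h₂]
          | tmul c' z' =>
            induction ρ y using TensorProduct.induction_on with
            | zero => simp
            | add _ _ h₁ h₂ => simp only [add_tmul, tmul_add, map_add, smul_add, h₁, h₂]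
            | tmul b' y' =>
              simp only [contractForm_tmul, smul_tmul', assoc_symm_tmul,
                reverseWeighted_tmul, yangBaxterWeightRight_tmul, smul_smul]
              ring_nf

theorem Bmap_isHYBESolution_id {μ : A →ₗ[k] A →ₗ[k] A} {Δ : A →ₗ[k] A ⊗[k] A}
    {R : A →ₗ[k] A →ₗ[k] k} (h : IsCobraidedBialgebra k μ Δ R) {ρ : V →ₗ[k] A ⊗[k] V}
    (hcoass : (TensorProduct.assoc k A A V).toLinearMap ∘ₗ map Δ LinearMap.id ∘ₗ ρ
      = map LinearMap.id ρ ∘ₗ ρ) :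
    IsHYBESolution k LinearMap.id (Bmap k R ρ ρ) := by
  refine ⟨by rw [map_id, LinearMap.comp_id, LinearMap.id_comp], ?_⟩
  rw [Bmap_yangBaxter_lhs_eq, Bmap_yangBaxter_rhs_eq, ← LinearMap.comp_assoc,
    ← LinearMap.comp_assoc, reverseWeighted_comp_map_iteratedCoaction hcoass,
    reverseWeighted_comp_map_iteratedCoaction hcoass, h.yangBaxterWeight_comp_comul]

end YangBaxter

theorem twisted_comodule_gives_HYBE_solution_general
    (k : Type*) {A V : Type*} [CommRing k] [AddCommGroup A] [Module k A]
    [AddCommGroup V] [Module k V]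
    (μ : A →ₗ[k] A →ₗ[k] A) (Δ : A →ₗ[k] A ⊗[k] A) (R : A →ₗ[k] A →ₗ[k] k)
    (h : IsCobraidedBialgebra k μ Δ R)
    (α : A →ₗ[k] A)
    (hinv : ∀ x y : A, R (α x) (α y) = R x y)
    (ρ : V →ₗ[k] A ⊗[k] V)
    (hcoass : (TensorProduct.assoc k A A V).toLinearMap
        ∘ₗ TensorProduct.map Δ LinearMap.id ∘ₗ ρ
      = TensorProduct.map LinearMap.id ρ ∘ₗ ρ)
    (αV : V →ₗ[k] V)
    (hαV : TensorProduct.map α αV ∘ₗ ρ = ρ ∘ₗ αV) :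
    IsHYBESolution k αV (TensorProduct.map αV αV ∘ₗ Bmap k R ρ ρ) :=
  (Bmap_isHYBESolution_id h hcoass).twist (Bmap_comp_map hinv hαV hαV)

/-- (Corollary 7.6: a classical comodule over a cobraided bialgebra,
together with a compatible pair `(α, α_V)` with `R` `α`-invariant, yields a solution
`B_α(v ⊗ w) = Σ R(w_A ⊗ v_A) α_V(w_V) ⊗ α_V(v_V)` of the HYBE for `(V, α_V)`. -/
theorem twisted_comodule_gives_HYBE_solution
    (k : Type*) {A V : Type*} [CommRing k] [AddCommGroup A] [Module k A]
    [AddCommGroup V] [Module k V]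
    (μ : A →ₗ[k] A →ₗ[k] A) (Δ : A →ₗ[k] A ⊗[k] A) (R : A →ₗ[k] A →ₗ[k] k)
    (h : IsCobraidedBialgebra k μ Δ R)
    (α : A →ₗ[k] A)
    (hmul : ∀ x y : A, α (μ x y) = μ (α x) (α y))
    (hcomul : TensorProduct.map α α ∘ₗ Δ = Δ ∘ₗ α)
    (hinv : ∀ x y : A, R (α x) (α y) = R x y)
    (ρ : V →ₗ[k] A ⊗[k] V)
    (hcoass : (TensorProduct.assoc k A A V).toLinearMap
        ∘ₗ TensorProduct.map Δ LinearMap.id ∘ₗ ρ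
      = TensorProduct.map LinearMap.id ρ ∘ₗ ρ)
    (αV : V →ₗ[k] V)
    (hαV : TensorProduct.map α αV ∘ₗ ρ = ρ ∘ₗ αV) :
    IsHYBESolution k αV (TensorProduct.map αV αV ∘ₗ Bmap k R ρ ρ) :=
  twisted_comodule_gives_HYBE_solution_general k μ Δ R h α hinv ρ hcoass αV hαV
end

section
/- Let (H, μ_H, Δ_H) be a bialgebra over a commutative ring k and (A, μ_A) an H-comodule algebra with structure map ρ : A → H ⊗ A (so ρ is a coassociative H-comodule structure on A and an algebra morphism: ρ(ab) = Σ a_H b_H ⊗ a_A b_A, writing ρ(a) = Σ a_H ⊗ a_A). Let α_H : H → H be a bialgebra morphism (multiplicative and comultiplicative), α_A : A → A an algebra morphism, and suppose ρ ∘ α_A = (α_H ⊗ α_A) ∘ ρ. Then the Hom-associative algebra A_α = (A, μ_α^A = α_A ∘ μ_A, α_A) is an H_α-comodule Hom-algebra with structure map ρ_α = ρ ∘ α_A, where H_α is the Hom-bialgebra (H, μ_α^H = α_H ∘ μ_H, Δ_α = Δ_H ∘ α_H, α_H). That is: (Δ_α ⊗ α_A)∘ρ_α = (α_H ⊗ ρ_α)∘ρ_α,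 (α_H ⊗ α_A)∘ρ_α = ρ_α∘α_A, and ρ_α(μ_α^A(a ⊗ b)) = Σ μ_α^H(a_H ⊗ b_H) ⊗ μ_α^A(a_A ⊗ b_A) where ρ_α(a) = Σ a_H ⊗ a_A. -/
open TensorProduct

/-! Every twisted axiom reduces to the corresponding untwisted one by moving all the twisting
maps to the outside, which is possible because `α_H ⊗ α_H` commutes with `Δ_H`, `α_A` with
`μ_A`, and `α_H ⊗ α_A` with `ρ`. For Hom-coassociativity both sides become
`(α_H² ⊗ α_H² ⊗ α_A²)` applied to the two sides of the coassociativity of `ρ`. -/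

section Twist

variable {k H A : Type*} [CommRing k] [AddCommGroup H] [Module k H] [AddCommGroup A] [Module k A]

theorem map_compr₂_of_map_mul {μ : A →ₗ[k] A →ₗ[k] A} {α : A →ₗ[k] A}
    (hα : ∀ a b, α (μ a b) = μ (α a) (α b)) (a b : A) :
    α (μ.compr₂ α a b) = μ.compr₂ α (α a) (α b) := by
  simp only [LinearMap.compr₂_apply, hα]

theorem compr₂_homAssoc {μ : A →ₗ[k] A →ₗ[k] A} {α : A →ₗ[k] A}
    (hμ : ∀ a b c, μ (μ a b) c = μ a (μ b c)) (hα : ∀ a b, α (μ a b) = μ (α a) (α b))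
    (a b c : A) :
    μ.compr₂ α (α a) (μ.compr₂ α b c) = μ.compr₂ α (μ.compr₂ α a b) (α c) := by
  simp only [LinearMap.compr₂_apply, ← hα, hμ]

theorem comp_comp_eq_map_comp_comp {M N P : Type*} [AddCommGroup M] [Module k M]
    [AddCommGroup N] [Module k N] [AddCommGroup P] [Module k P] {f : M →ₗ[k] N ⊗[k] P}
    {α : M →ₗ[k] M} {β : N →ₗ[k] N} {γ : P →ₗ[k] P} (h : f ∘ₗ α = map β γ ∘ₗ f) :
    f ∘ₗ α ∘ₗ α = map (β ∘ₗ β) (γ ∘ₗ γ) ∘ₗ f := by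
  rw [← LinearMap.comp_assoc, h, LinearMap.comp_assoc, h, ← LinearMap.comp_assoc,
    map_comp]

theorem isComodule_comp {Δ : H →ₗ[k] H ⊗[k] H} {ρ : A →ₗ[k] H ⊗[k] A}
    {αH : H →ₗ[k] H} {αA : A →ₗ[k] A}
    (hcoass : (TensorProduct.assoc k H H A).toLinearMap ∘ₗ map Δ LinearMap.id ∘ₗ ρ
      = map LinearMap.id ρ ∘ₗ ρ)
    (hαH : map αH αH ∘ₗ Δ = Δ ∘ₗ αH)
    (hρ : ρ ∘ₗ αA = map αH αA ∘ₗ ρ) :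
    IsComodule k (Δ ∘ₗ αH) αH αA (ρ ∘ₗ αA) := by
  refine ⟨?_, by rw [← LinearMap.comp_assoc, ← hρ, LinearMap.comp_assoc]⟩
  have hρa (a : A) : ρ (αA a) = map αH αA (ρ a) := LinearMap.congr_fun hρ a
  refine LinearMap.ext fun a => ?_
  calc TensorProduct.assoc k H H A (map (Δ ∘ₗ αH) αA (ρ (αA a)))
      = TensorProduct.assoc k H H A
          (map (map (αH ∘ₗ αH) (αH ∘ₗ αH)) (αA ∘ₗ αA) (map Δ LinearMap.id (ρ a))) := by
        rw [hρa, map_map, map_map, LinearMap.comp_assoc,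
          comp_comp_eq_map_comp_comp hαH.symm]
        rfl
    _ = map (αH ∘ₗ αH) (map (αH ∘ₗ αH) (αA ∘ₗ αA)) (map LinearMap.id ρ (ρ a)) := by
        rw [← map_map_assoc]
        exact congrArg _ (LinearMap.congr_fun hcoass a)
    _ = map αH (ρ ∘ₗ αA) (ρ (αA a)) := by
        rw [hρa, map_map, map_map, LinearMap.comp_assoc (h := ρ), comp_comp_eq_map_comp_comp hρ]
        rfl

theorem comp_compr₂_eq_sum_tmul {μH : H →ₗ[k] H →ₗ[k] H} {μA : A →ₗ[k] A →ₗ[k] A}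
    {ρ : A →ₗ[k] H ⊗[k] A} {αH : H →ₗ[k] H} {αA : A →ₗ[k] A}
    (hmul : ∀ (a b : A) (m n : ℕ)
        (aH : Fin m → H) (aA : Fin m → A) (bH : Fin n → H) (bA : Fin n → A),
      ρ a = ∑ i, aH i ⊗ₜ[k] aA i → ρ b = ∑ j, bH j ⊗ₜ[k] bA j →
      ρ (μA a b) = ∑ i, ∑ j, μH (aH i) (bH j) ⊗ₜ[k] μA (aA i) (bA j))
    (hαA : ∀ a b, αA (μA a b) = μA (αA a) (αA b))
    (hρ : ρ ∘ₗ αA = map αH αA ∘ₗ ρ) {a b : A} {m n : ℕ}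
    {aH : Fin m → H} {aA : Fin m → A} {bH : Fin n → H} {bA : Fin n → A}
    (ha : (ρ ∘ₗ αA) a = ∑ i, aH i ⊗ₜ[k] aA i) (hb : (ρ ∘ₗ αA) b = ∑ j, bH j ⊗ₜ[k] bA j) :
    (ρ ∘ₗ αA) (μA.compr₂ αA a b)
      = ∑ i, ∑ j, μH.compr₂ αH (aH i) (bH j) ⊗ₜ[k] μA.compr₂ αA (aA i) (bA j) := by
  calc (ρ ∘ₗ αA) (μA.compr₂ αA a b)
      = map αH αA (ρ (μA (αA a) (αA b))) := by
        rw [LinearMap.comp_apply, LinearMap.compr₂_apply, hαA]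
        exact LinearMap.congr_fun hρ _
    _ = map αH αA (∑ i, ∑ j, μH (aH i) (bH j) ⊗ₜ[k] μA (aA i) (bA j)) := by
        rw [hmul _ _ m n aH aA bH bA ha hb]
    _ = ∑ i, ∑ j, μH.compr₂ αH (aH i) (bH j) ⊗ₜ[k] μA.compr₂ αA (aA i) (bA j) := by
        simp only [map_sum, map_tmul, LinearMap.compr₂_apply]

end Twist

theorem comodule_algebra_twist_general
    (k : Type*) {H A : Type*} [CommRing k] [AddCommGroup H] [Module k H]
    [AddCommGroup A] [Module k A]
    (μH : H →ₗ[k] H →ₗ[k] H) (ΔH : H →ₗ[k] H ⊗[k] H)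
    (μA : A →ₗ[k] A →ₗ[k] A)
    (hAassoc : ∀ a b c : A, μA (μA a b) c = μA a (μA b c))
    (ρ : A →ₗ[k] H ⊗[k] A)
    (hcoass : (TensorProduct.assoc k H H A).toLinearMap
        ∘ₗ TensorProduct.map ΔH LinearMap.id ∘ₗ ρ
      = TensorProduct.map LinearMap.id ρ ∘ₗ ρ)
    (hmult : ∀ (a b : A) (m n : ℕ)
        (aH : Fin m → H) (aA : Fin m → A) (bH : Fin n → H) (bA : Fin n → A),
      ρ a = ∑ i, aH i ⊗ₜ[k] aA i → ρ b = ∑ j, bH j ⊗ₜ[k] bA j →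
      ρ (μA a b) = ∑ i, ∑ j, μH (aH i) (bH j) ⊗ₜ[k] μA (aA i) (bA j))
    (αH : H →ₗ[k] H) (αA : A →ₗ[k] A)
    (hαHcomul : TensorProduct.map αH αH ∘ₗ ΔH = ΔH ∘ₗ αH)
    (hαAmul : ∀ a b : A, αA (μA a b) = μA (αA a) (αA b))
    (hcompat : ρ ∘ₗ αA = TensorProduct.map αH αA ∘ₗ ρ) :
    -- `A_α` is a Hom-associative algebra:
    ((∀ a b : A, αA ((μA.compr₂ αA) a b) = (μA.compr₂ αA) (αA a) (αA b)) ∧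
      (∀ a b c : A,
        (μA.compr₂ αA) (αA a) ((μA.compr₂ αA) b c)
          = (μA.compr₂ αA) ((μA.compr₂ αA) a b) (αA c))) ∧
    -- Hom-coassociativity of `ρ_α = ρ ∘ α_A` over `H_α = (H, α_H∘μ_H, Δ_H∘α_H, α_H)`:
    ((TensorProduct.assoc k H H A).toLinearMap
        ∘ₗ TensorProduct.map (ΔH ∘ₗ αH) αA ∘ₗ (ρ ∘ₗ αA)
      = TensorProduct.map αH (ρ ∘ₗ αA) ∘ₗ (ρ ∘ₗ αA)) ∧
    -- comultiplicativity of `ρ_α`: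
    (TensorProduct.map αH αA ∘ₗ (ρ ∘ₗ αA) = (ρ ∘ₗ αA) ∘ₗ αA) ∧
    -- multiplicativity of `ρ_α` with respect to the twisted multiplications:
    (∀ (a b : A) (m n : ℕ)
        (aH : Fin m → H) (aA : Fin m → A) (bH : Fin n → H) (bA : Fin n → A),
      (ρ ∘ₗ αA) a = ∑ i, aH i ⊗ₜ[k] aA i → (ρ ∘ₗ αA) b = ∑ j, bH j ⊗ₜ[k] bA j →
      (ρ ∘ₗ αA) ((μA.compr₂ αA) a b)
        = ∑ i, ∑ j, (μH.compr₂ αH) (aH i) (bH j) ⊗ₜ[k] (μA.compr₂ αA) (aA i) (bA j)) := by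
  obtain ⟨hcoassα, hcompatα⟩ := isComodule_comp hcoass hαHcomul hcompat
  exact ⟨⟨map_compr₂_of_map_mul hαAmul, compr₂_homAssoc hAassoc hαAmul⟩, hcoassα, hcompatα,
    fun _ _ _ _ _ _ _ _ => comp_compr₂_eq_sum_tmul hmult hαAmul hcompat⟩

/-- Theorem 8.6: twisting a comodule algebra into a comodule
Hom-algebra.  Given an `H`-comodule algebra `(A, μ_A, ρ)`, a bialgebra morphism
`α_H`, and an algebra morphism `α_A` with `ρ ∘ α_A = (α_H ⊗ α_A) ∘ ρ`, the
Hom-associative algebra `A_α = (A, α_A∘μ_A, α_A)` is an `H_α`-comodule Hom-algebra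
with structure map `ρ_α = ρ ∘ α_A`, where `H_α = (H, α_H∘μ_H, Δ_H∘α_H, α_H)`. -/
theorem comodule_algebra_twist
    (k : Type*) {H A : Type*} [CommRing k] [AddCommGroup H] [Module k H]
    [AddCommGroup A] [Module k A]
    (μH : H →ₗ[k] H →ₗ[k] H) (ΔH : H →ₗ[k] H ⊗[k] H)
    (hH : IsBialgebraNC k μH ΔH)
    (μA : A →ₗ[k] A →ₗ[k] A)
    (hAassoc : ∀ a b c : A, μA (μA a b) c = μA a (μA b c))
    (ρ : A →ₗ[k] H ⊗[k] A)
    (hcoass : (TensorProduct.assoc k H H A).toLinearMap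
        ∘ₗ TensorProduct.map ΔH LinearMap.id ∘ₗ ρ
      = TensorProduct.map LinearMap.id ρ ∘ₗ ρ)
    (hmult : ∀ (a b : A) (m n : ℕ)
        (aH : Fin m → H) (aA : Fin m → A) (bH : Fin n → H) (bA : Fin n → A),
      ρ a = ∑ i, aH i ⊗ₜ[k] aA i → ρ b = ∑ j, bH j ⊗ₜ[k] bA j →
      ρ (μA a b) = ∑ i, ∑ j, μH (aH i) (bH j) ⊗ₜ[k] μA (aA i) (bA j))
    (αH : H →ₗ[k] H) (αA : A →ₗ[k] A)
    (hαHmul : ∀ x y : H, αH (μH x y) = μH (αH x) (αH y))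
    (hαHcomul : TensorProduct.map αH αH ∘ₗ ΔH = ΔH ∘ₗ αH)
    (hαAmul : ∀ a b : A, αA (μA a b) = μA (αA a) (αA b))
    (hcompat : ρ ∘ₗ αA = TensorProduct.map αH αA ∘ₗ ρ) :
    -- `A_α` is a Hom-associative algebra:
    ((∀ a b : A, αA ((μA.compr₂ αA) a b) = (μA.compr₂ αA) (αA a) (αA b)) ∧
      (∀ a b c : A,
        (μA.compr₂ αA) (αA a) ((μA.compr₂ αA) b c)
          = (μA.compr₂ αA) ((μA.compr₂ αA) a b) (αA c))) ∧
    -- Hom-coassociativity of `ρ_α = ρ ∘ α_A` over `H_α = (H, α_H∘μ_H, Δ_H∘α_H, α_H)`: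
    ((TensorProduct.assoc k H H A).toLinearMap
        ∘ₗ TensorProduct.map (ΔH ∘ₗ αH) αA ∘ₗ (ρ ∘ₗ αA)
      = TensorProduct.map αH (ρ ∘ₗ αA) ∘ₗ (ρ ∘ₗ αA)) ∧
    -- comultiplicativity of `ρ_α`:
    (TensorProduct.map αH αA ∘ₗ (ρ ∘ₗ αA) = (ρ ∘ₗ αA) ∘ₗ αA) ∧
    -- multiplicativity of `ρ_α` with respect to the twisted multiplications:
    (∀ (a b : A) (m n : ℕ)
        (aH : Fin m → H) (aA : Fin m → A) (bH : Fin n → H) (bA : Fin n → A),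
      (ρ ∘ₗ αA) a = ∑ i, aH i ⊗ₜ[k] aA i → (ρ ∘ₗ αA) b = ∑ j, bH j ⊗ₜ[k] bA j →
      (ρ ∘ₗ αA) ((μA.compr₂ αA) a b)
        = ∑ i, ∑ j, (μH.compr₂ αH) (aH i) (bH j) ⊗ₜ[k] (μA.compr₂ αA) (aA i) (bA j)) :=
  comodule_algebra_twist_general k μH ΔH μA hAassoc ρ hcoass hmult αH αA hαHcomul hαAmul hcompat
end
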